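/- Assume (A0). Then: (a) 𝒱 ⊆ [−inf_{k≥1} a_k, inf_{k≥1} b_k]; (b) if v, v' ∈ 𝒱 with v < v', then the whole interval [v, v'] is contained in 𝒱; (c) if v ∈ 𝒱 with v > 0, then [0, v] ⊆ 𝒱. -/
import Mathlib


open Finset Filter Topology MeasureTheory
open scoped ENNReal

/-- `alphaSeq a b k = (a_1 ⋯ a_k)/(b_1 ⋯ b_k)`, with `alphaSeq a b 0 = 1`. -/
noncomputable def alphaSeq (a b : ℕ → ℝ) (k : ℕ) : ℝ :=
  ∏ i ∈ Finset.Icc 1 k, (a i / b i)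

/-- `betaSeq a b k = 1/b_k + a_k/(b_k b_{k-1}) + ⋯ + (a_k ⋯ a_2)/(b_k ⋯ b_1)`,
with `betaSeq a b 0 = 0`. -/
noncomputable def betaSeq (a b : ℕ → ℝ) (k : ℕ) : ℝ :=
  ∑ j ∈ Finset.Icc 1 k, (∏ i ∈ Finset.Icc (j+1) k, a i) / (∏ i ∈ Finset.Icc j k, b i)

/-- The stable traffic equation: `ρ 0 = 1` and
`(b_i + a_{i+1}) ρ_i = a_i ρ_{i-1} + b_{i+1} ρ_{i+1}` for all `i ≥ 1`. -/
def IsSTE (a b : ℕ → ℝ) (ρ : ℕ → ℝ) : Prop :=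
  ρ 0 = 1 ∧ ∀ i, 1 ≤ i → (b i + a (i+1)) * ρ i = a i * ρ (i-1) + b (i+1) * ρ (i+1)

/-- An admissible solution of the stable traffic equation: moreover `ρ k ∈ (0,1)` for `k ≥ 1`. -/
def IsAdmissible (a b : ℕ → ℝ) (ρ : ℕ → ℝ) : Prop :=
  IsSTE a b ρ ∧ ∀ k, 1 ≤ k → ρ k ∈ Set.Ioo (0:ℝ) 1

/-- The set `𝒱` of `v` such that `α + v β` is an admissible solution. -/
def speedSet (a b : ℕ → ℝ) : Set ℝ :=
  {v : ℝ | IsAdmissible a b (fun k => alphaSeq a b k + v * betaSeq a b k)}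

lemma alphaSeq_zero (a b : ℕ → ℝ) : alphaSeq a b 0 = 1 := by simp [alphaSeq]

lemma betaSeq_zero (a b : ℕ → ℝ) : betaSeq a b 0 = 0 := by simp [betaSeq]

lemma alphaSeq_succ (a b : ℕ → ℝ) (k : ℕ) :
    alphaSeq a b (k+1) = alphaSeq a b k * (a (k+1) / b (k+1)) := by
  simp [alphaSeq, Finset.prod_Icc_succ_top (Nat.succ_le_succ (Nat.zero_le k))]

lemma betaSeq_succ (a b : ℕ → ℝ) (k : ℕ) :
    betaSeq a b (k+1) = a (k+1) / b (k+1) * betaSeq a b k + 1 / b (k+1) := by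
  unfold betaSeq
  rw [Finset.sum_Icc_succ_top (Nat.succ_le_succ (Nat.zero_le k)), Finset.mul_sum]
  congr 1
  · apply Finset.sum_congr rfl
    intro j hj
    simp only [Finset.mem_Icc] at hj
    rw [Finset.prod_Icc_succ_top (by omega : j+1 ≤ k+1),
        Finset.prod_Icc_succ_top (by omega : j ≤ k+1), div_mul_div_comm]
    ring
  · rw [Finset.Icc_eq_empty (by omega : ¬ (k+1+1 ≤ k+1))]
    simp

lemma alpha_rec (a b : ℕ → ℝ) (k : ℕ) (hbk : b (k+1) ≠ 0) :
    b (k+1) * alphaSeq a b (k+1) = a (k+1) * alphaSeq a b k := by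
  rw [alphaSeq_succ]
  field_simp

lemma beta_rec (a b : ℕ → ℝ) (k : ℕ) (hbk : b (k+1) ≠ 0) :
    b (k+1) * betaSeq a b (k+1) = 1 + a (k+1) * betaSeq a b k := by
  rw [betaSeq_succ]
  field_simp
  ring

lemma alphaSeq_pos (a b : ℕ → ℝ) (ha : ∀ k, 1 ≤ k → 0 < a k) (hb : ∀ k, 1 ≤ k → 0 < b k)
    (k : ℕ) : 0 < alphaSeq a b k := by
  apply Finset.prod_pos
  intro i hi
  simp only [Finset.mem_Icc] at hi
  exact div_pos (ha i hi.1) (hb i hi.1)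

lemma betaSeq_nonneg (a b : ℕ → ℝ) (ha : ∀ k, 1 ≤ k → 0 < a k) (hb : ∀ k, 1 ≤ k → 0 < b k) :
    ∀ k, 0 ≤ betaSeq a b k := by
  intro k
  induction k with
  | zero => simp [betaSeq_zero]
  | succ n ih =>
    rw [betaSeq_succ]
    have h1 := ha (n+1) (by omega)
    have h2 := hb (n+1) (by omega)
    positivity

lemma ste_all (a b : ℕ → ℝ) (hb : ∀ k, 1 ≤ k → 0 < b k) (v : ℝ) :
    IsSTE a b (fun k => alphaSeq a b k + v * betaSeq a b k) := by
  constructor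
  · simp [alphaSeq_zero, betaSeq_zero]
  · intro i hi
    obtain ⟨j, rfl⟩ : ∃ j, i = j+1 := ⟨i-1, by omega⟩
    simp only [Nat.add_sub_cancel]
    have hb1 := (hb (j+1) (by omega)).ne'
    have hb2 := (hb (j+2) (by omega)).ne'
    have e1 := alpha_rec a b j hb1
    have e2 := alpha_rec a b (j+1) hb2
    have e3 := beta_rec a b j hb1
    have e4 := beta_rec a b (j+1) hb2
    linear_combination e1 - e2 + v * e3 - v * e4

/-- Under (A0): (a) 𝒱 ⊆ [-inf_{k≥1} a_k, inf_{k≥1} b_k];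
(b) if v, v' ∈ 𝒱 with v < v' then [v, v'] ⊆ 𝒱; (c) if v ∈ 𝒱 with v > 0 then [0, v] ⊆ 𝒱. -/
theorem stmt11 (a b : ℕ → ℝ) (ha : ∀ k, 1 ≤ k → 0 < a k) (hb : ∀ k, 1 ≤ k → 0 < b k) :
    speedSet a b ⊆ Set.Icc (-(⨅ k : ℕ, a (k+1))) (⨅ k : ℕ, b (k+1)) ∧
    (∀ v v' : ℝ, v ∈ speedSet a b → v' ∈ speedSet a b → v < v' →
      Set.Icc v v' ⊆ speedSet a b) ∧
    (∀ v : ℝ, v ∈ speedSet a b → 0 < v → Set.Icc (0:ℝ) v ⊆ speedSet a b) := by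
  refine ⟨?_, ?_, ?_⟩
  · -- part (a)
    intro v hv
    obtain ⟨hste, hioo⟩ := hv
    -- key identity: b (k+1) ρ (k+1) - a (k+1) ρ k = v
    have key : ∀ k : ℕ,
        b (k+1) * (alphaSeq a b (k+1) + v * betaSeq a b (k+1))
          - a (k+1) * (alphaSeq a b k + v * betaSeq a b k) = v := by
      intro k
      have hb1 := (hb (k+1) (by omega)).ne'
      have e1 := alpha_rec a b k hb1
      have e3 := beta_rec a b k hb1
      linear_combination e1 + v * e3
    have hρle1 : ∀ k : ℕ, alphaSeq a b k + v * betaSeq a b k ≤ 1 := by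
      intro k
      rcases Nat.eq_zero_or_pos k with h | h
      · subst h; simp [alphaSeq_zero, betaSeq_zero]
      · exact le_of_lt (hioo k h).2
    have hρpos : ∀ k : ℕ, 0 < alphaSeq a b k + v * betaSeq a b k := by
      intro k
      rcases Nat.eq_zero_or_pos k with h | h
      · subst h; simp [alphaSeq_zero, betaSeq_zero]
      · exact (hioo k h).1
    constructor
    · rw [neg_le]
      apply le_ciInf
      intro k
      have hk := key k
      have h1 := hρpos (k+1)
      have h2 := hρle1 k
      have hak := ha (k+1) (by omega)
      have hbk := hb (k+1) (by omega)
      nlinarith [mul_pos hbk h1, mul_le_mul_of_nonneg_left h2 hak.le]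
    · apply le_ciInf
      intro k
      have hk := key k
      have h1 := (hioo (k+1) (by omega)).2
      have h2 := hρpos k
      have hak := ha (k+1) (by omega)
      have hbk := hb (k+1) (by omega)
      simp only at h1
      nlinarith [mul_lt_mul_of_pos_left h1 hbk, mul_pos hak h2]
  · -- part (b)
    intro v v' hv hv' _ t ht
    refine ⟨ste_all a b hb t, ?_⟩
    intro k hk
    have hβ := betaSeq_nonneg a b ha hb k
    have h1 := (hv.2 k hk).1
    have h2 := (hv'.2 k hk).2
    have hl : v * betaSeq a b k ≤ t * betaSeq a b k :=
      mul_le_mul_of_nonneg_right ht.1 hβ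
    have hr : t * betaSeq a b k ≤ v' * betaSeq a b k :=
      mul_le_mul_of_nonneg_right ht.2 hβ
    constructor
    · simp only at h1 ⊢; linarith
    · simp only at h2 ⊢; linarith
  · -- part (c)
    intro v hv _ t ht
    refine ⟨ste_all a b hb t, ?_⟩
    intro k hk
    have hβ := betaSeq_nonneg a b ha hb k
    have hα := alphaSeq_pos a b ha hb k
    have h2 := (hv.2 k hk).2
    have hl : 0 ≤ t * betaSeq a b k := mul_nonneg ht.1 hβ
    have hr : t * betaSeq a b k ≤ v * betaSeq a b k :=
      mul_le_mul_of_nonneg_right ht.2 hβ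
    constructor
    · simp only; linarith
    · simp only at h2 ⊢; linarith
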